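/- arXiv:2111.15237 — 5 statements merged into one kernel-verified Lean document; each statement's English description precedes it below -/
import Mathlib

section
/- Let A be a finite-dimensional simple algebra over a field F with char(F) ≠ 2. If an element c ∈ A satisfies cx² ∈ [A,A] for every x ∈ A, then c = 0. -/
/-!
Polarizing `c * x ^ 2` (using `2 ≠ 0`) puts `c * x` in `[A,A]` for every `x`, and then
`a * c * x ≡ c * x * a = c * (x * a)` modulo commutators puts the whole ideal `A c A` in `[A,A]`.
If `c ≠ 0`, simplicity forces `[A,A] = A`. This is impossible in any nonzero finite-dimensional
algebra: after base change to an algebraic closure, the algebra maps onto a simple quotient,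
which by Wedderburn–Artin is a full matrix algebra, where the trace kills commutators but not a
matrix unit.
-/

open TensorProduct

def commutatorSpan (F A : Type*) [CommRing F] [Ring A] [Algebra F A] : Submodule F A :=
  Submodule.span F {z : A | ∃ u v : A, z = u * v - v * u}

section CommutatorSpan

variable {F A B : Type*} [CommRing F] [Ring A] [Algebra F A] [Ring B] [Algebra F B]

theorem commutator_mem_commutatorSpan (u v : A) : u * v - v * u ∈ commutatorSpan F A :=
  Submodule.subset_span ⟨u, v, rfl⟩

theorem map_commutatorSpan_le (f : A →ₐ[F] B) :
    (commutatorSpan F A).map f.toLinearMap ≤ commutatorSpan F B := by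
  rw [commutatorSpan, Submodule.map_span_le]
  rintro _ ⟨u, v, rfl⟩
  simpa using commutator_mem_commutatorSpan (f u) (f v)

theorem commutatorSpan_eq_top_of_surjective (f : A →ₐ[F] B) (hf : Function.Surjective f)
    (h : commutatorSpan F A = ⊤) : commutatorSpan F B = ⊤ := by
  have hrange : LinearMap.range f.toLinearMap = ⊤ := LinearMap.range_eq_top.mpr hf
  rw [eq_top_iff, ← hrange, LinearMap.range_eq_map, ← h]
  exact map_commutatorSpan_le f

theorem commutatorSpan_baseChange_eq_top (K : Type*) [Field K] [Algebra F K]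
    (h : commutatorSpan F A = ⊤) : commutatorSpan K (K ⊗[F] A) = ⊤ := by
  have h1 (a : A) : (1 : K) ⊗ₜ[F] a ∈ commutatorSpan K (K ⊗[F] A) := by
    apply Submodule.span_le_restrictScalars F K
    apply map_commutatorSpan_le Algebra.TensorProduct.includeRight
    exact Submodule.mem_map_of_mem (h ▸ Submodule.mem_top)
  refine Submodule.restrictScalars_injective F _ _ ?_
  rw [Submodule.restrictScalars_top, eq_top_iff, ← TensorProduct.span_tmul_eq_top F K A,
    Submodule.span_le]
  rintro _ ⟨k, a, rfl⟩
  simpa [TensorProduct.smul_tmul'] using (commutatorSpan K (K ⊗[F] A)).smul_mem k (h1 a)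

end CommutatorSpan

theorem Matrix.commutatorSpan_ne_top (K n : Type*) [CommRing K] [Nontrivial K] [Fintype n]
    [DecidableEq n] [Nonempty n] : commutatorSpan K (Matrix n n K) ≠ ⊤ := by
  have hle : commutatorSpan K (Matrix n n K) ≤ LinearMap.ker (Matrix.traceLinearMap n K K) := by
    rw [commutatorSpan, Submodule.span_le]
    rintro _ ⟨u, v, rfl⟩
    simp [Matrix.trace_mul_comm u v]
  intro h
  obtain ⟨i⟩ := ‹Nonempty n›
  have := hle (h ▸ Submodule.mem_top : Matrix.single i i (1 : K) ∈ commutatorSpan K _)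
  simp at this

theorem TwoSidedIdeal.isSimpleRing_quotient_of_isCoatom {R : Type*} [Ring R] {I : TwoSidedIdeal R}
    (hI : IsCoatom I) : IsSimpleRing I.ringCon.Quotient := by
  have hker (x : R) : I.ringCon.mk' x = 0 ↔ x ∈ I := by
    rw [← mem_ker, ker_ringCon_mk']
  have : Nontrivial I.ringCon.Quotient :=
    nontrivial_of_ne 1 0 fun h => hI.1 (I.one_mem_iff.mp ((hker 1).mp (by simpa using h)))
  refine .of_eq_bot_or_eq_top fun J => ?_
  have hIJ : I ≤ J.comap I.ringCon.mk' := fun x hx => by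
    rw [mem_comap, (hker x).mpr hx]
    exact J.zero_mem
  rcases hI.le_iff.mp hIJ with h | h
  · right
    rw [← J.one_mem_iff, ← map_one I.ringCon.mk', ← mem_comap, h]
    trivial
  · left
    rw [eq_bot_iff]
    intro q hq
    obtain ⟨x, rfl⟩ := I.ringCon.mk'_surjective q
    rw [mem_bot, hker, ← h, mem_comap]
    exact hq

instance TwoSidedIdeal.isCoatomic {R : Type*} [Ring R] [IsNoetherianRing R] :
    IsCoatomic (TwoSidedIdeal R) :=
  have hmono : StrictMono (asIdeal (R := R)) :=
    asIdeal.monotone.strictMono_of_injective fun _ _ h => SetLike.coe_injective congr(($h : Set R))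
  isCoatomic_of_orderTop_gt_wellFounded hmono.wellFoundedGT.wf

theorem commutatorSpan_ne_top_of_isAlgClosed (K B : Type*) [Field K] [IsAlgClosed K] [Ring B]
    [Algebra K B] [FiniteDimensional K B] [Nontrivial B] : commutatorSpan K B ≠ ⊤ := by
  have := IsNoetherianRing.of_finite K B
  obtain ⟨I, hI, -⟩ := (eq_top_or_exists_le_coatom (⊥ : TwoSidedIdeal B)).resolve_left bot_ne_top
  have := TwoSidedIdeal.isSimpleRing_quotient_of_isCoatom hI
  let π := RingCon.mkₐ K I.ringCon
  have hπ : Function.Surjective π := RingCon.mkₐ_surjective I.ringCon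
  have := Module.Finite.of_surjective π.toLinearMap hπ
  obtain ⟨n, _, ⟨e⟩⟩ := IsSimpleRing.exists_algEquiv_matrix_of_isAlgClosed K I.ringCon.Quotient
  exact fun h => Matrix.commutatorSpan_ne_top K (Fin n) <| commutatorSpan_eq_top_of_surjective
    (e.toAlgHom.comp π) (e.surjective.comp hπ) h

theorem commutatorSpan_ne_top (F A : Type*) [Field F] [Ring A] [Algebra F A]
    [FiniteDimensional F A] [Nontrivial A] : commutatorSpan F A ≠ ⊤ := fun h =>
  commutatorSpan_ne_top_of_isAlgClosed (AlgebraicClosure F) (AlgebraicClosure F ⊗[F] A)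
    (commutatorSpan_baseChange_eq_top _ h)

theorem Submodule.mul_mem_of_forall_mul_sq_mem {F A : Type*} [Field F] [Ring A] [Algebra F A]
    (h2 : (2 : F) ≠ 0) (S : Submodule F A) {c : A} (h : ∀ x, c * x ^ 2 ∈ S) (x : A) :
    c * x ∈ S := by
  have hpolar : c * (x + 1) ^ 2 - c * x ^ 2 - c * 1 ^ 2 = (2 : F) • (c * x) := by
    rw [two_smul]; noncomm_ring
  rw [← S.smul_mem_iff h2, ← hpolar]
  exact S.sub_mem (S.sub_mem (h _) (h _)) (h _)

theorem mul_mul_mem_commutatorSpan {F A : Type*} [CommRing F] [Ring A] [Algebra F A] {c : A}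
    (h : ∀ x, c * x ∈ commutatorSpan F A) (a x : A) : a * c * x ∈ commutatorSpan F A := by
  have : a * c * x = (a * (c * x) - c * x * a) + c * (x * a) := by noncomm_ring
  rw [this]
  exact add_mem (commutator_mem_commutatorSpan _ _) (h _)

theorem AddSubgroup.eq_top_of_mul_mul_mem {A : Type*} [Ring A] [IsSimpleRing A] (S : AddSubgroup A)
    {c : A} (hc : c ≠ 0) (h : ∀ a b, a * c * b ∈ S) : S = ⊤ := by
  -- the largest two-sided ideal contained in `S`
  let J : TwoSidedIdeal A := .mk' {y | ∀ a b, a * y * b ∈ S} (by simp [S.zero_mem])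
    (fun hx hy a b => by simpa [mul_add, add_mul] using S.add_mem (hx a b) (hy a b))
    (fun hx a b => by simpa using S.neg_mem (hx a b))
    (fun {x _} hy a b => by simpa [mul_assoc] using hy (a * x) b)
    (fun {_ y} hx a b => by simpa [mul_assoc] using hx a (y * b))
  have hJ : (1 : A) ∈ J :=
    IsSimpleRing.one_mem_of_ne_zero_mem J hc (TwoSidedIdeal.mem_mk' .. |>.mpr h)
  exact eq_top_iff.mpr fun x _ => by simpa using (TwoSidedIdeal.mem_mk' .. |>.mp hJ) x 1

/-- Let `A` be a finite-dimensional simple algebra over a field `F` with `char F ≠ 2`.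
If `c ∈ A` satisfies `c * x ^ 2 ∈ [A,A]` for every `x ∈ A`, then `c = 0`. -/
theorem eq_zero_of_mul_sq_mem_commutator_span (F A : Type*) [Field F] [Ring A] [Algebra F A]
    [FiniteDimensional F A] [IsSimpleRing A] (h2 : (2 : F) ≠ 0) (c : A)
    (h : ∀ x : A, c * x ^ 2 ∈ Submodule.span F {z : A | ∃ u v : A, z = u * v - v * u}) :
    c = 0 := by
  by_contra hc
  have hcx : ∀ x, c * x ∈ commutatorSpan F A :=
    (commutatorSpan F A).mul_mem_of_forall_mul_sq_mem h2 h
  refine commutatorSpan_ne_top F A (Submodule.toAddSubgroup_eq_top.mp ?_)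
  exact AddSubgroup.eq_top_of_mul_mul_mem _ hc (mul_mul_mem_commutatorSpan hcx)
end

section
/- Let A be an algebra over a field F with char(F) ≠ 2 and char(F) ≠ 3. If a linear map T : A → A satisfies T(x)³ − x³ ∈ [A,A] for every x ∈ A, then T(x)² T(y) − x² y ∈ [A,A] for all x, y ∈ A. -/
/-- **Lemma 3.2 (first part).** Let `A` be an algebra over a field `F` with
`char F ≠ 2, 3`. If a linear map `T : A → A` satisfies `T x ^ 3 - x ^ 3 ∈ [A,A]` for
every `x ∈ A`, then `T x ^ 2 * T y - x ^ 2 * y ∈ [A,A]` for all `x, y ∈ A`. -/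
theorem sq_mul_sub_mem_commutator_span (F A : Type*) [Field F] [Ring A] [Algebra F A]
    (h2 : (2 : F) ≠ 0) (h3 : (3 : F) ≠ 0) (T : A →ₗ[F] A)
    (hT : ∀ x : A, T x ^ 3 - x ^ 3 ∈
      Submodule.span F {z : A | ∃ u v : A, z = u * v - v * u}) :
    ∀ x y : A, T x ^ 2 * T y - x ^ 2 * y ∈
      Submodule.span F {z : A | ∃ u v : A, z = u * v - v * u} := by
  intro x y
  set S := Submodule.span F {z : A | ∃ u v : A, z = u * v - v * u} with hS
  have hc : ∀ u v : A, u * v - v * u ∈ S := fun u v => Submodule.subset_span ⟨u, v, rfl⟩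
  have h6 : (6 : F) ≠ 0 := by
    have : (6 : F) = 2 * 3 := by norm_num
    rw [this]; exact mul_ne_zero h2 h3
  have key : (6 : ℕ) • (T x ^ 2 * T y - x ^ 2 * y) =
      ((T (x + y)) ^ 3 - (x + y) ^ 3) - ((T (x - y)) ^ 3 - (x - y) ^ 3)
      - ((T y ^ 3 - y ^ 3) + (T y ^ 3 - y ^ 3))
      - (((T x * T y) * T x - T x * (T x * T y)) + ((T x * T y) * T x - T x * (T x * T y)))
      - ((T y * T x ^ 2 - T x ^ 2 * T y) + (T y * T x ^ 2 - T x ^ 2 * T y))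
      + (((x * y) * x - x * (x * y)) + ((x * y) * x - x * (x * y)))
      + ((y * x ^ 2 - x ^ 2 * y) + (y * x ^ 2 - x ^ 2 * y)) := by
    simp only [map_add, map_sub]
    noncomm_ring
  have mem : (6 : ℕ) • (T x ^ 2 * T y - x ^ 2 * y) ∈ S := by
    rw [key]
    exact S.add_mem (S.add_mem (S.sub_mem (S.sub_mem (S.sub_mem (S.sub_mem (hT _) (hT _))
      (S.add_mem (hT y) (hT y))) (S.add_mem (hc _ _) (hc _ _)))
      (S.add_mem (hc _ _) (hc _ _))) (S.add_mem (hc _ _) (hc _ _)))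
      (S.add_mem (hc _ _) (hc _ _))
  have h := S.smul_mem (6 : F)⁻¹ mem
  rw [← Nat.cast_smul_eq_nsmul F, smul_smul] at h
  have : (6 : F)⁻¹ * ((6 : ℕ) : F) = 1 := by
    push_cast
    exact inv_mul_cancel₀ h6
  rwa [this, one_smul] at h
end

section
/- Let A be a finite-dimensional algebra over a field F with char(F) ≠ 2 and char(F) ≠ 3, and let T : A → A be a linear map satisfying T(x)³ − x³ ∈ [A,A] for every x ∈ A. If ker T ∩ rad(A) = {0}, then T is bijective and T(M) ⊆ M for every maximal two-sided ideal M of A; in particular T(rad(A)) ⊆ rad(A). -/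
/-!
For every maximal ideal `M` of `A` there is a nonzero `F`-linear trace functional
`ψ : A → F̄` vanishing on `M`: the semisimple quotient of `F̄ ⊗ (A/M)` is a product of matrix
algebras over `F̄`, and a matrix trace pulls back. (A trace over `F` itself can vanish
identically, e.g. on an inseparable field extension, hence the detour through `F̄`.)
Such a `ψ` kills `[A,A]`, and `{x | ψ(xA) = 0}` is a proper two-sided ideal containing `M`,
so it is `M`. Polarizing `ψ(T(x)³) = ψ(x³)` with `3 ≠ 0` gives
`ψ(Tx Ty Tz + Tx Tz Ty) = ψ(xyz + xzy)`. With `z = 1`, `Tx = 0` forces `2ψ(xy) = 0` for all `y`,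
so `x` lies in every `M`, hence in `rad A`; thus `T` is injective, hence bijective. With `Tz = 1`,
`x ∈ M` forces `2ψ(Tx Ty) = 0` for all `y`, so `Tx ∈ M`.
-/

open TensorProduct

/-- The radical of a finite-dimensional algebra, realized as the intersection of all
maximal two-sided ideals. -/
noncomputable def ringRad (A : Type*) [Ring A] : TwoSidedIdeal A :=
  sInf {M : TwoSidedIdeal A | IsCoatom M}

section TraceFunctional

variable {R A V : Type*} [Semiring R] [Ring A] [Module R A] [AddCommGroup V] [Module R V]
  {ψ : A →ₗ[R] V}

theorem map_eq_zero_of_mem_span_commutators (htr : ∀ u v, ψ (u * v) = ψ (v * u)) {w : A}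
    (hw : w ∈ Submodule.span R {z : A | ∃ u v : A, z = u * v - v * u}) : ψ w = 0 := by
  refine (Submodule.span_le (p := LinearMap.ker ψ)).2 ?_ hw
  rintro _ ⟨u, v, rfl⟩
  simp [htr]

theorem map_cube_polarization (htr : ∀ u v, ψ (u * v) = ψ (v * u)) (a b c : A) :
    ψ ((a + b + c) ^ 3 - (a + b) ^ 3 - (b + c) ^ 3 - (a + c) ^ 3 + a ^ 3 + b ^ 3 + c ^ 3) =
      3 • ψ (a * b * c + a * c * b) := by
  have expand : (a + b + c) ^ 3 - (a + b) ^ 3 - (b + c) ^ 3 - (a + c) ^ 3 + a ^ 3 + b ^ 3 + c ^ 3 =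
      (a * b * c + a * c * b) + (b * c * a + c * b * a) + (c * a * b + b * a * c) := by
    noncomm_ring
  have h₁ : ψ (b * c * a + c * b * a) = ψ (a * b * c + a * c * b) := by
    rw [map_add, map_add, htr, htr (c * b), ← mul_assoc, ← mul_assoc]
  have h₂ : ψ (c * a * b + b * a * c) = ψ (a * b * c + a * c * b) := by
    rw [map_add, map_add, mul_assoc, htr, mul_assoc b, htr b, add_comm]
  rw [expand, map_add, map_add, h₁, h₂]
  abel

theorem mem_of_isCoatom_of_forall_trace_mul_eq_zero {M : TwoSidedIdeal A} (hM : IsCoatom M)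
    (hψ : ψ ≠ 0) (htr : ∀ u v, ψ (u * v) = ψ (v * u))
    (hψM : ∀ m ∈ M, ψ m = 0) {x : A} (hx : ∀ y, ψ (x * y) = 0) : x ∈ M := by
  let I : TwoSidedIdeal A := .mk' {x | ∀ y, ψ (x * y) = 0} (by simp)
    (fun ha hb y ↦ by simp [add_mul, ha y, hb y]) (fun ha y ↦ by simp [ha y])
    (fun {a b} hb y ↦ by rw [mul_assoc, htr, mul_assoc, hb])
    (fun {a b} ha y ↦ by rw [mul_assoc, ha])
  have mem_I (z : A) : z ∈ I ↔ ∀ y, ψ (z * y) = 0 := TwoSidedIdeal.mem_mk' ..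
  have hMI : M ≤ I := fun m hm ↦ (mem_I m).2 fun y ↦ hψM _ (M.mul_mem_right m y hm)
  have hI : I ≠ ⊤ := fun h ↦ hψ <| LinearMap.ext fun y ↦ by
    simpa using (mem_I 1).1 (I.one_mem_iff.2 h) y
  exact (hM.le_iff.mp hMI).resolve_left hI ▸ (mem_I x).2 hx

end TraceFunctional

theorem map_triple_eq_of_map_cube_eq {F A V : Type*} [Field F] [Ring A] [Module F A]
    [AddCommGroup V] [Module F V] (h3 : (3 : F) ≠ 0) {ψ : A →ₗ[F] V}
    (htr : ∀ u v, ψ (u * v) = ψ (v * u)) {T : A →ₗ[F] A} (hcube : ∀ w, ψ (T w ^ 3) = ψ (w ^ 3))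
    (x y z : A) : ψ (T x * T y * T z + T x * T z * T y) = ψ (x * y * z + x * z * y) := by
  have h : 3 • ψ (T x * T y * T z + T x * T z * T y) = 3 • ψ (x * y * z + x * z * y) := by
    rw [← map_cube_polarization htr, ← map_cube_polarization htr]
    simp only [← map_add T]
    simp only [map_add ψ, map_sub ψ, hcube]
  rw [← Nat.cast_smul_eq_nsmul F, ← Nat.cast_smul_eq_nsmul F] at h
  exact smul_right_injective V (by exact_mod_cast h3) h

theorem exists_trace_ne_zero_pi_matrix {K ι : Type*} [Field K] [Nonempty ι] {n : ι → Type*}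
    [∀ i, Fintype (n i)] [∀ i, Nonempty (n i)] :
    ∃ φ : (Π i, Matrix (n i) (n i) K) →ₗ[K] K, φ ≠ 0 ∧ ∀ u v, φ (u * v) = φ (v * u) := by
  obtain ⟨i⟩ := ‹Nonempty ι›
  obtain ⟨j⟩ : Nonempty (n i) := inferInstance
  classical
  refine ⟨Matrix.traceLinearMap (n i) K K ∘ₗ LinearMap.proj i, fun h ↦ ?_, fun u v ↦ ?_⟩
  · simpa using LinearMap.congr_fun h (Pi.single i (Matrix.single j j 1))
  · simpa using Matrix.trace_mul_comm (u i) (v i)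

theorem exists_trace_ne_zero_of_surjective {R B C V : Type*} [CommSemiring R] [Ring B] [Ring C]
    [Algebra R B] [Algebra R C] [AddCommMonoid V] [Module R V] {f : B →ₐ[R] C}
    (hf : Function.Surjective f)
    (h : ∃ φ : C →ₗ[R] V, φ ≠ 0 ∧ ∀ u v, φ (u * v) = φ (v * u)) :
    ∃ φ : B →ₗ[R] V, φ ≠ 0 ∧ ∀ u v, φ (u * v) = φ (v * u) := by
  obtain ⟨φ, hφ, htr⟩ := h
  refine ⟨φ ∘ₗ f.toLinearMap, fun h ↦ hφ ?_, fun u v ↦ by simpa using htr (f u) (f v)⟩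
  ext c
  obtain ⟨b, rfl⟩ := hf c
  simpa using LinearMap.congr_fun h b

theorem exists_trace_ne_zero_of_isAlgClosed {K B : Type*} [Field K] [IsAlgClosed K] [Ring B]
    [Nontrivial B] [Algebra K B] [FiniteDimensional K B] :
    ∃ φ : B →ₗ[K] K, φ ≠ 0 ∧ ∀ u v, φ (u * v) = φ (v * u) := by
  have := IsArtinianRing.of_finite K B
  have : Nontrivial (B ⧸ Ring.jacobson B) :=
    Ideal.Quotient.nontrivial_iff.mpr (Ring.jacobson_lt_top B).ne
  obtain ⟨m, d, hd, ⟨e⟩⟩ := IsSemisimpleRing.exists_algEquiv_pi_matrix_of_isAlgClosed K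
    (B ⧸ Ring.jacobson B)
  have : Nonempty (Fin m) := by
    by_contra h
    rw [not_nonempty_iff] at h
    exact not_subsingleton _ e.toEquiv.subsingleton
  exact exists_trace_ne_zero_of_surjective (Ideal.Quotient.mkₐ_surjective K _)
    (exists_trace_ne_zero_of_surjective (f := e.toAlgHom) e.surjective
      exists_trace_ne_zero_pi_matrix)

theorem exists_trace_ne_zero_algebraicClosure {F B : Type*} [Field F] [Ring B] [Nontrivial B]
    [Algebra F B] [FiniteDimensional F B] :
    ∃ ψ : B →ₗ[F] AlgebraicClosure F, ψ ≠ 0 ∧ ∀ u v, ψ (u * v) = ψ (v * u) := by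
  obtain ⟨φ, hφ, htr⟩ :=
    exists_trace_ne_zero_of_isAlgClosed (K := AlgebraicClosure F) (B := AlgebraicClosure F ⊗[F] B)
  let ι : B →ₐ[F] AlgebraicClosure F ⊗[F] B := Algebra.TensorProduct.includeRight
  refine ⟨φ.restrictScalars F ∘ₗ ι.toLinearMap, fun h ↦ hφ ?_, fun u v ↦ ?_⟩
  · refine AlgebraTensorModule.ext fun a b ↦ ?_
    have : φ (1 ⊗ₜ b) = 0 := by simpa [ι] using LinearMap.congr_fun h b
    rw [LinearMap.zero_apply, ← mul_one a, ← smul_eq_mul, ← smul_tmul', map_smul, this,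
      smul_zero]
  · simpa [ι] using htr (1 ⊗ₜ u) (1 ⊗ₜ v)

theorem exists_trace_ne_zero_of_isCoatom {F A : Type*} [Field F] [Ring A] [Algebra F A]
    [FiniteDimensional F A] {M : TwoSidedIdeal A} (hM : IsCoatom M) :
    ∃ ψ : A →ₗ[F] AlgebraicClosure F,
      ψ ≠ 0 ∧ (∀ u v, ψ (u * v) = ψ (v * u)) ∧ ∀ x ∈ M, ψ x = 0 := by
  have : Nontrivial (A ⧸ M.asIdeal) := Ideal.Quotient.nontrivial_iff.mpr fun h ↦
    hM.1 <| M.one_mem_iff.1 <| TwoSidedIdeal.mem_asIdeal.1 <| h ▸ Submodule.mem_top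
  obtain ⟨φ, hφ, htr⟩ := exists_trace_ne_zero_algebraicClosure (F := F) (B := A ⧸ M.asIdeal)
  let π := Ideal.Quotient.mkₐ F M.asIdeal
  refine ⟨φ ∘ₗ π.toLinearMap, fun h ↦ hφ ?_, fun u v ↦ by simpa using htr (π u) (π v),
    fun x hx ↦ ?_⟩
  · exact (LinearMap.cancel_right (Ideal.Quotient.mkₐ_surjective F _)).mp h
  · simp [π, Ideal.Quotient.eq_zero_iff_mem.2 (TwoSidedIdeal.mem_asIdeal.2 hx)]

/-- **Lemma 3.2 (second part).** Let `A` be a finite-dimensional algebra over a field `F`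
with `char F ≠ 2, 3`, and let `T : A → A` be a linear map satisfying
`T x ^ 3 - x ^ 3 ∈ [A,A]` for every `x`. If `ker T ∩ rad A = {0}`, then `T` is bijective
and leaves every maximal two-sided ideal of `A` invariant; in particular
`T (rad A) ⊆ rad A`. -/
theorem bijective_and_maximal_ideals_invariant (F A : Type*) [Field F] [Ring A]
    [Algebra F A] [FiniteDimensional F A] (h2 : (2 : F) ≠ 0) (h3 : (3 : F) ≠ 0)
    (T : A →ₗ[F] A)
    (hT : ∀ x : A, T x ^ 3 - x ^ 3 ∈
      Submodule.span F {z : A | ∃ u v : A, z = u * v - v * u})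
    (hker : ∀ x : A, T x = 0 → x ∈ ringRad A → x = 0) :
    Function.Bijective T ∧
      (∀ M : TwoSidedIdeal A, IsCoatom M → ∀ x ∈ M, T x ∈ M) ∧
      (∀ x ∈ ringRad A, T x ∈ ringRad A) := by
  have key (ψ : A →ₗ[F] AlgebraicClosure F) (htr : ∀ u v, ψ (u * v) = ψ (v * u)) (x y z : A) :
      ψ (T x * T y * T z + T x * T z * T y) = ψ (x * y * z + x * z * y) :=
    map_triple_eq_of_map_cube_eq h3 htr (fun w ↦ sub_eq_zero.1 <| by
      rw [← map_sub]; exact map_eq_zero_of_mem_span_commutators htr (hT w)) x y z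
  have half (v : AlgebraicClosure F) (hv : v + v = 0) : v = 0 :=
    (smul_eq_zero.1 ((two_smul F v).trans hv)).resolve_left h2
  have hinj : Function.Injective T := by
    refine (injective_iff_map_eq_zero T).2 fun x hx ↦
      hker x hx <| (TwoSidedIdeal.mem_sInf A).2 fun M hM ↦ ?_
    obtain ⟨ψ, hψ, htr, hψM⟩ := exists_trace_ne_zero_of_isCoatom (F := F) hM
    refine mem_of_isCoatom_of_forall_trace_mul_eq_zero hM hψ htr hψM fun y ↦ half _ ?_
    simpa [hx] using (key ψ htr x y 1).symm
  have hsurj : Function.Surjective T := LinearMap.injective_iff_surjective.1 hinj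
  have hinv (M : TwoSidedIdeal A) (hM : IsCoatom M) (x : A) (hx : x ∈ M) : T x ∈ M := by
    obtain ⟨ψ, hψ, htr, hψM⟩ := exists_trace_ne_zero_of_isCoatom (F := F) hM
    obtain ⟨z, hz⟩ := hsurj 1
    refine mem_of_isCoatom_of_forall_trace_mul_eq_zero hM hψ htr hψM fun a ↦ half _ ?_
    obtain ⟨y, rfl⟩ := hsurj a
    have hM' : x * y * z + x * z * y ∈ M :=
      M.add_mem (M.mul_mem_right _ _ (M.mul_mem_right _ _ hx))
        (M.mul_mem_right _ _ (M.mul_mem_right _ _ hx))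
    simpa [hz, hψM _ hM'] using key ψ htr x y z
  refine ⟨⟨hinj, hsurj⟩, hinv, fun x hx ↦ ?_⟩
  exact (TwoSidedIdeal.mem_sInf A).2 fun M hM ↦ hinv M hM x ((TwoSidedIdeal.mem_sInf A).1 hx M hM)
end

section
/- Let A be an algebra over a field F with char(F) ≠ 2, and let a, b ∈ A satisfy a² = ab = ba = b² = 0. Then the map T : A → A defined by T(x) = x + axb − bxa satisfies T(x)² − x² ∈ [A,A] for every x ∈ A, and T(1) = 1. -/
/-- **Example 3.4.** Let `A` be an algebra over a field `F` with `char F ≠ 2`, and let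
`a, b ∈ A` satisfy `a² = ab = ba = b² = 0`. Then `T x = x + a*x*b - b*x*a` satisfies
`T x ^ 2 - x ^ 2 ∈ [A,A]` for every `x ∈ A`, and `T 1 = 1`. -/
theorem sq_diff_mem_commutator_span_of_orthogonal (F A : Type*) [Field F] [Ring A]
    [Algebra F A] (h2 : (2 : F) ≠ 0) (a b : A)
    (ha : a * a = 0) (hab : a * b = 0) (hba : b * a = 0) (hb : b * b = 0) :
    (∀ x : A, (x + a * x * b - b * x * a) ^ 2 - x ^ 2 ∈
        Submodule.span F {z : A | ∃ u v : A, z = u * v - v * u}) ∧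
      (1 : A) + a * 1 * b - b * 1 * a = 1 := by
  have ha' : ∀ y : A, a * (a * y) = 0 := fun y => by rw [← mul_assoc, ha, zero_mul]
  have hab' : ∀ y : A, a * (b * y) = 0 := fun y => by rw [← mul_assoc, hab, zero_mul]
  have hba' : ∀ y : A, b * (a * y) = 0 := fun y => by rw [← mul_assoc, hba, zero_mul]
  have hb' : ∀ y : A, b * (b * y) = 0 := fun y => by rw [← mul_assoc, hb, zero_mul]
  constructor
  · intro x
    have key : (x + a * x * b - b * x * a) ^ 2 - x ^ 2 =
        ((x * a * x) * b - b * (x * a * x)) + (a * (x * b * x) - (x * b * x) * a) := by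
      simp only [sq, mul_add, add_mul, mul_sub, sub_mul, mul_assoc, ha', hab', hba', hb',
        mul_zero, zero_mul, sub_zero, add_zero, zero_sub, zero_add]
      abel
    rw [key]
    exact Submodule.add_mem _
      (Submodule.subset_span ⟨x * a * x, b, rfl⟩)
      (Submodule.subset_span ⟨a, x * b * x, rfl⟩)
  · rw [mul_one a, mul_one b, hab, hba]; abel
end

section
/- Let F be an infinite field, let V and W be vector spaces over F, and let n and m₁, …, m_n be positive integers. Suppose fᵢ : V^{mᵢ} → W is an mᵢ-linear map for each i ∈ {1, …, n}, and that for each x ∈ V at least one of the elements f₁(x, …, x), …, f_n(x, …, x) is 0. Then there exists an i ∈ {1, …, n} such that fᵢ(x, …, x) = 0 for every x ∈ V. -/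
/-- **Lemma 3.10.** Let `F` be an infinite field, `V` and `W` vector spaces over `F`, and
`n, m₁, …, m_n` positive integers. Suppose `mᵢ`-linear maps `fᵢ : V^{mᵢ} → W` are such
that for each `x ∈ V` at least one of `f₁(x,…,x), …, f_n(x,…,x)` is `0`. Then there is an
`i` such that `fᵢ(x,…,x) = 0` for every `x ∈ V`. -/
theorem exists_multilinear_vanishing_on_diagonal (F : Type*) [Field F] [Infinite F]
    (V W : Type*) [AddCommGroup V] [Module F V] [AddCommGroup W] [Module F W]
    (n : ℕ) (hn : 0 < n) (m : Fin n → ℕ) (hm : ∀ i, 0 < m i)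
    (f : ∀ i : Fin n, MultilinearMap F (fun _ : Fin (m i) => V) W)
    (h : ∀ x : V, ∃ i : Fin n, f i (fun _ => x) = 0) :
    ∃ i : Fin n, ∀ x : V, f i (fun _ => x) = 0 := by
  by_contra hc
  push_neg at hc
  choose x hx using hc
  -- dual functionals
  have hφ : ∀ i, ∃ φ : Module.Dual F W, φ (f i (fun _ => x i)) ≠ 0 := by
    intro i
    by_contra hφ
    push_neg at hφ
    exact hx i ((Module.forall_dual_apply_eq_zero_iff F _).mp hφ)
  choose φ hφ using hφ
  -- the polynomials
  set Q : Fin n → MvPolynomial (Fin n) F := fun i =>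
    ∑ r : Fin (m i) → Fin n,
      (∏ k, MvPolynomial.X (r k)) * MvPolynomial.C (φ i (f i (fun k => x (r k)))) with hQ
  have keyeval : ∀ (i : Fin n) (t : Fin n → F),
      MvPolynomial.eval t (Q i) = φ i (f i (fun _ => ∑ j, t j • x j)) := by
    intro i t
    rw [show (fun _ : Fin (m i) => ∑ j, t j • x j) = fun _ : Fin (m i) => ∑ j, t j • x j from rfl]
    rw [MultilinearMap.map_sum (f i) (fun _ j => t j • x j)]
    rw [map_sum]
    simp only [hQ, map_sum, map_mul, MvPolynomial.eval_C, MvPolynomial.eval_prod,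
      MvPolynomial.eval_X]
    refine Finset.sum_congr rfl fun r _ => ?_
    rw [MultilinearMap.map_smul_univ, map_smul]
    simp [mul_comm, smul_eq_mul]
  -- nonvanishing at indicator
  have hQne : ∀ i, Q i ≠ 0 := by
    intro i hzero
    have := keyeval i (fun j => if j = i then 1 else 0)
    rw [hzero, map_zero] at this
    have hsum : (∑ j, (if j = i then (1:F) else 0) • x j) = x i := by
      simp [ite_smul]
    rw [hsum] at this
    exact hφ i this.symm
  have hprod : (∏ i, Q i) ≠ 0 := Finset.prod_ne_zero_iff.mpr fun i _ => hQne i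
  have : ∃ t : Fin n → F, MvPolynomial.eval t (∏ i, Q i) ≠ 0 := by
    by_contra hev
    push_neg at hev
    exact hprod (MvPolynomial.funext fun t => by simp [hev t])
  obtain ⟨t, ht⟩ := this
  rw [map_prod] at ht
  obtain ⟨i, hi⟩ := h (∑ j, t j • x j)
  have hne : MvPolynomial.eval t (Q i) ≠ 0 := Finset.prod_ne_zero_iff.mp ht i (by simp)
  rw [keyeval, hi, map_zero] at hne
  exact hne rfl
end
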